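/- arXiv:1205.1213 — 4 statements merged into one kernel-verified Lean document; each statement's English description precedes it below -/
import Mathlib

section
/- Let u(x,y) := (cos x − cos(√3·y))²/2 and h(y) := −4·sin²(√3·y), and let Ω := {(x,y) ∈ ℝ² : |x − 2π + √3·y| < 2π and |x − 2π − √3·y| < 2π}. Then u ≥ 0 on ℝ², Δu(x,y) + 4·u(x,y) + h(y) = 0 for all (x,y) ∈ ℝ², and u = 0 at every point of the boundary ∂Ω. -/
open Real

/-- The planar Laplacian of `u : ℝ² → ℝ`: `Δu = ∂²u/∂x² + ∂²u/∂y²`. -/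
noncomputable def planarLaplacian (u : ℝ × ℝ → ℝ) (p : ℝ × ℝ) : ℝ :=
  deriv (fun t => deriv (fun s => u (s, p.2)) t) p.1 +
  deriv (fun t => deriv (fun s => u (p.1, s)) t) p.2

/-!
Write `u = (f x - g y)² / 2` with `f = cos` and `g = cos (√3 ·)`, so that
`Δu = f'² + g'² + (f - g)(f'' - g'')`. Since `f'' = -f` and `g'' = -3g`, adding `4u` leaves
`sin² x + cos² x + 3 sin² √3y - cos² √3y = 4 sin² √3y`.
On `∂Ω` one of `x ± √3 y` equals `0` or `4π`, so `cos x = cos √3y` there.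
-/

theorem deriv_deriv_sq_half {f : ℝ → ℝ} (hf : Differentiable ℝ f)
    (hf' : Differentiable ℝ (deriv f)) (t : ℝ) :
    deriv (deriv fun s => f s ^ 2 / 2) t = deriv f t ^ 2 + f t * deriv (deriv f) t := by
  have hfirst : deriv (fun s => f s ^ 2 / 2) = fun s => f s * deriv f s := by
    funext s
    rw [(((hf s).hasDerivAt.fun_pow 2).div_const 2).deriv]
    ring
  rw [hfirst, ((hf t).hasDerivAt.fun_mul (hf' t).hasDerivAt).deriv]
  ring

theorem planarLaplacian_sub_sq_half {f g : ℝ → ℝ} (hf : Differentiable ℝ f)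
    (hf' : Differentiable ℝ (deriv f)) (hg : Differentiable ℝ g)
    (hg' : Differentiable ℝ (deriv g)) (p : ℝ × ℝ) :
    planarLaplacian (fun p => (f p.1 - g p.2) ^ 2 / 2) p =
      deriv f p.1 ^ 2 + deriv g p.2 ^ 2 +
        (f p.1 - g p.2) * (deriv (deriv f) p.1 - deriv (deriv g) p.2) := by
  have hx := deriv_deriv_sq_half (hf.sub_const (g p.2)) (by rwa [deriv_sub_const_fun]) p.1
  have hy := deriv_deriv_sq_half (hg.const_sub (f p.1))
    (by rw [deriv_const_sub']; exact hg'.neg) p.2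
  rw [deriv_sub_const_fun] at hx
  rw [deriv_const_sub', deriv.fun_neg'] at hy
  simp only [planarLaplacian, hx, hy]
  ring

theorem deriv_cos_mul (a : ℝ) : deriv (fun s => cos (a * s)) = fun s => -(a * sin (a * s)) := by
  funext s
  rw [deriv_comp_mul_left, Real.deriv_cos, smul_eq_mul, mul_neg]

theorem deriv_sin_mul (a : ℝ) : deriv (fun s => sin (a * s)) = fun s => a * cos (a * s) := by
  funext s
  rw [deriv_comp_mul_left, Real.deriv_sin, smul_eq_mul]

theorem planarLaplacian_cos_sub_cos_mul (a : ℝ) (p : ℝ × ℝ) :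
    planarLaplacian (fun p => (cos p.1 - cos (a * p.2)) ^ 2 / 2) p =
      sin p.1 ^ 2 + a ^ 2 * sin (a * p.2) ^ 2 -
        (cos p.1 - cos (a * p.2)) * (cos p.1 - a ^ 2 * cos (a * p.2)) := by
  rw [planarLaplacian_sub_sq_half (g := fun s => cos (a * s)) differentiable_cos
    (by simp) (by fun_prop) (by rw [deriv_cos_mul]; fun_prop)]
  simp only [deriv_cos_mul, Real.deriv_cos', deriv.fun_neg', Real.deriv_sin,
    deriv_const_mul_field', deriv_sin_mul]
  ring

theorem frontier_setOf_lt_and_lt_subset {X α : Type*} [TopologicalSpace X] [LinearOrder α]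
    [TopologicalSpace α] [OrderClosedTopology α] {f g : X → α} (hf : Continuous f)
    (hg : Continuous g) (a b : α) :
    frontier {p | f p < a ∧ g p < b} ⊆ {p | f p = a ∨ g p = b} := by
  rw [Set.ofPred_and]
  refine (frontier_inter_subset _ _).trans (Set.union_subset ?_ ?_)
  · exact fun p hp => Or.inl (frontier_lt_subset_eq hf continuous_const hp.1)
  · exact fun p hp => Or.inr (frontier_lt_subset_eq hg continuous_const hp.2)

theorem cos_eq_cos_of_abs_sub_two_pi_eq {x t : ℝ}
    (h : |x - 2 * π + t| = 2 * π ∨ |x - 2 * π - t| = 2 * π) : cos x = cos t := by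
  rw [cos_eq_cos_iff]
  rcases h with h | h <;> rcases (abs_eq (by positivity)).1 h with h | h
  · exact ⟨2, Or.inr (by push_cast; linarith)⟩
  · exact ⟨0, Or.inr (by push_cast; linarith)⟩
  · exact ⟨-2, Or.inl (by push_cast; linarith)⟩
  · exact ⟨0, Or.inl (by push_cast; linarith)⟩

/-- For `u(x,y) = (cos x − cos(√3 y))²/2`, `h(y) = −4 sin²(√3 y)` and the rhombus
`Ω = {|x − 2π + √3 y| < 2π, |x − 2π − √3 y| < 2π}`: `u ≥ 0`, `Δu + 4u + h = 0` on
all of `ℝ²`, and `u = 0` on `∂Ω`. -/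
theorem explicit_example_rhombus :
    ∀ (u : ℝ × ℝ → ℝ) (h : ℝ → ℝ) (Ω : Set (ℝ × ℝ)),
      (u = fun p => (Real.cos p.1 - Real.cos (Real.sqrt 3 * p.2)) ^ 2 / 2) →
      (h = fun y => -4 * Real.sin (Real.sqrt 3 * y) ^ 2) →
      (Ω = {p : ℝ × ℝ |
        |p.1 - 2 * π + Real.sqrt 3 * p.2| < 2 * π ∧
        |p.1 - 2 * π - Real.sqrt 3 * p.2| < 2 * π}) →
      (∀ p : ℝ × ℝ, 0 ≤ u p) ∧
      (∀ p : ℝ × ℝ, planarLaplacian u p + 4 * u p + h p.2 = 0) ∧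
      (∀ p ∈ frontier Ω, u p = 0) := by
  rintro u h Ω rfl rfl rfl
  refine ⟨fun p => by positivity, fun p => ?_, fun p hp => ?_⟩
  · beta_reduce
    rw [planarLaplacian_cos_sub_cos_mul, sq_sqrt zero_le_three]
    linear_combination sin_sq_add_cos_sq p.1 - sin_sq_add_cos_sq (√3 * p.2)
  · have hboundary := frontier_setOf_lt_and_lt_subset (by fun_prop) (by fun_prop) _ _ hp
    simp [cos_eq_cos_of_abs_sub_two_pi_eq hboundary]
end

section
/- The zero set of the function w(x,y) := (cos(√3·y) − cos x)·sin x in ℝ² is exactly the union of the vertical lines {(x,y) : x = kπ} over all integers k and the slanted lines {(x,y) : y = (x + 2kπ)/√3} and {(x,y) : y = −(x + 2kπ)/√3} over all integers k. -/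
open Real

/-- The nodal set of `w(x,y) = (cos(√3 y) − cos x)·sin x` consists exactly of the
vertical lines `x = kπ` (`k ∈ ℤ`) and the slanted lines `y = ±(x + 2kπ)/√3` (`k ∈ ℤ`). -/
theorem nodal_set_of_w :
    {p : ℝ × ℝ | (Real.cos (Real.sqrt 3 * p.2) - Real.cos p.1) * Real.sin p.1 = 0} =
      {p : ℝ × ℝ | ∃ k : ℤ, p.1 = k * π} ∪
      {p : ℝ × ℝ | ∃ k : ℤ, p.2 = (p.1 + 2 * k * π) / Real.sqrt 3} ∪
      {p : ℝ × ℝ | ∃ k : ℤ, p.2 = -((p.1 + 2 * k * π) / Real.sqrt 3)} := by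
  have h3 : Real.sqrt 3 ≠ 0 := by positivity
  ext ⟨x, y⟩
  simp only [Set.mem_setOf_eq, Set.mem_union, mul_eq_zero, sub_eq_zero,
    Real.cos_eq_cos_iff, Real.sin_eq_zero_iff]
  constructor
  · rintro (⟨k, hk | hk⟩ | ⟨k, hk⟩)
    · left; right
      refine ⟨-k, ?_⟩
      rw [eq_div_iff h3]; push_cast; linarith
    · right
      refine ⟨-k, ?_⟩
      rw [eq_comm, neg_eq_iff_eq_neg, div_eq_iff h3, eq_comm]; push_cast; linarith
    · left; left; exact ⟨k, hk.symm⟩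
  · rintro ((⟨k, hk⟩ | ⟨k, hk⟩) | ⟨k, hk⟩)
    · right; exact ⟨k, hk.symm⟩
    · left; refine ⟨-k, Or.inl ?_⟩
      rw [eq_div_iff h3] at hk; push_cast; linarith
    · left; refine ⟨-k, Or.inr ?_⟩
      rw [eq_comm, neg_eq_iff_eq_neg, div_eq_iff h3] at hk; push_cast; linarith
end

section
/- Let v : ℝ² → ℝ be twice continuously differentiable with Δv + 4v = 0 on ℝ², and let μ : (a,b) → ℝ be a continuously differentiable function on an open interval (a,b) such that v(μ(y), y) = 0 for all y ∈ (a,b). Define u(x,y) := ∫_{μ(y)}^{x} v(t,y) dt for x ∈ ℝ and y ∈ (a,b). Then Δu(x,y) + 4·u(x,y) + h(y) = 0 for all x ∈ ℝ and y ∈ (a,b), where h(y) := (∂v/∂y)(μ(y), y)·μ′(y) − (∂v/∂x)(μ(y), y). -/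
/-!
Since `u(x, y) = ∫_{μ(y)}^x v(t, y) dt`, we have `u_x = v`, hence `u_xx = v_x(x, y)`.
Differentiating under the integral sign, `u_y = ∫_{μ(y)}^x v_y(t, y) dt − μ′(y) v(μ(y), y)`,
and the boundary term vanishes on `(a, b)`; differentiating once more,
`u_yy = ∫_{μ(y)}^x v_yy(t, y) dt − μ′(y) v_y(μ(y), y)`. Substituting `v_yy = −v_xx − 4v` and
integrating `v_xx` by the fundamental theorem of calculus, `v_x(x, y)` cancels against `u_xx`
and what remains is `−4u − h(y)`.
-/

open Real

open MeasureTheory intervalIntegral Filter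

section PartialDerivatives

variable {E : Type*} [NormedAddCommGroup E] [NormedSpace ℝ E] {w : ℝ × ℝ → E}

noncomputable def partialFst (w : ℝ × ℝ → E) (p : ℝ × ℝ) : E := fderiv ℝ w p (1, 0)

noncomputable def partialSnd (w : ℝ × ℝ → E) (p : ℝ × ℝ) : E := fderiv ℝ w p (0, 1)

theorem DifferentiableAt.hasDerivAt_partialFst {t s : ℝ} (hw : DifferentiableAt ℝ w (t, s)) :
    HasDerivAt (fun r => w (r, s)) (partialFst w (t, s)) t :=
  hw.hasFDerivAt.comp_hasDerivAt t ((hasDerivAt_id t).prodMk (hasDerivAt_const t s))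

theorem DifferentiableAt.hasDerivAt_partialSnd {t s : ℝ} (hw : DifferentiableAt ℝ w (t, s)) :
    HasDerivAt (fun r => w (t, r)) (partialSnd w (t, s)) s :=
  hw.hasFDerivAt.comp_hasDerivAt s ((hasDerivAt_const s t).prodMk (hasDerivAt_id s))

theorem contDiff_partialFst {n : WithTop ℕ∞} (hw : ContDiff ℝ (n + 1) w) :
    ContDiff ℝ n (partialFst w) :=
  (hw.fderiv_right le_rfl).clm_apply contDiff_const

theorem contDiff_partialSnd {n : WithTop ℕ∞} (hw : ContDiff ℝ (n + 1) w) :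
    ContDiff ℝ n (partialSnd w) :=
  (hw.fderiv_right le_rfl).clm_apply contDiff_const

theorem continuous_partialFst (hw : ContDiff ℝ 1 w) : Continuous (partialFst w) :=
  (hw.continuous_fderiv one_ne_zero).clm_apply continuous_const

theorem continuous_partialSnd (hw : ContDiff ℝ 1 w) : Continuous (partialSnd w) :=
  (hw.continuous_fderiv one_ne_zero).clm_apply continuous_const

theorem hasDerivAt_intervalIntegral_param (hw : ContDiff ℝ 1 w) (c d s : ℝ) :
    HasDerivAt (fun s => ∫ t in c..d, w (t, s)) (∫ t in c..d, partialSnd w (t, s)) s := by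
  have hw₂ : Continuous (partialSnd w) := continuous_partialSnd hw
  have hslice : ∀ r, Continuous fun t => w (t, r) := fun r => by fun_prop
  have hslice₂ : Continuous fun t => partialSnd w (t, s) := by fun_prop
  obtain ⟨C, hC⟩ := (isCompact_uIcc.prod (isCompact_closedBall s 1)).exists_bound_of_continuousOn
    hw₂.continuousOn
  refine (hasDerivAt_integral_of_dominated_loc_of_deriv_le (bound := fun _ => C)
    (Metric.ball_mem_nhds s one_pos)
    (Eventually.of_forall fun r => (hslice r).aestronglyMeasurable)
    ((hslice s).intervalIntegrable c d) hslice₂.aestronglyMeasurable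
    (Eventually.of_forall fun t ht r hr =>
      hC (t, r) ⟨Set.uIoc_subset_uIcc ht, Metric.ball_subset_closedBall hr⟩)
    intervalIntegrable_const
    (Eventually.of_forall fun t _ r _ =>
      ((hw.differentiable one_ne_zero) _).hasDerivAt_partialSnd)).2

/-- Both partial derivatives of `(r, s) ↦ ∫ t in r..x, w (t, s)` exist and are continuous,
which yields strict differentiability. -/
theorem hasStrictFDerivAt_intervalIntegral_lowerLimit_param [CompleteSpace E]
    (hw : ContDiff ℝ 1 w) (x : ℝ) (p : ℝ × ℝ) :
    HasStrictFDerivAt (fun p : ℝ × ℝ => ∫ t in p.1..x, w (t, p.2))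
      (((1 : ℝ →L[ℝ] ℝ).smulRight (-w p)).coprod
        ((1 : ℝ →L[ℝ] ℝ).smulRight (∫ t in p.1..x, partialSnd w (t, p.2)))) p := by
  have hw₂ : Continuous (partialSnd w) := continuous_partialSnd hw
  have hcont : Continuous fun q : ℝ × ℝ => ∫ t in q.1..x, partialSnd w (t, q.2) := by
    simp_rw [integral_symm (a := x)]
    exact (continuous_parametric_intervalIntegral_of_continuous (μ := volume)
      (f := fun q t => partialSnd w (t, q.2)) (by fun_prop) continuous_fst).neg
  refine hasStrictFDerivAt_uncurry_coprod (f := fun r s => ∫ t in r..x, w (t, s))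
    (f₁ := fun r s => (1 : ℝ →L[ℝ] ℝ).smulRight (-w (r, s)))
    (f₂ := fun r s => (1 : ℝ →L[ℝ] ℝ).smulRight (∫ t in r..x, partialSnd w (t, s)))
    (Eventually.of_forall fun q => ?_) (Eventually.of_forall fun q => ?_) ?_ ?_
  · have hslice : Continuous fun t => w (t, q.2) := by fun_prop
    exact (integral_hasDerivAt_left (hslice.intervalIntegrable _ _)
      (hslice.stronglyMeasurableAtFilter _ _) hslice.continuousAt).hasFDerivAt
  · exact (hasDerivAt_intervalIntegral_param hw q.1 x q.2).hasFDerivAt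
  · exact Continuous.continuousAt (by fun_prop)
  · exact Continuous.continuousAt (by fun_prop)

theorem hasDerivAt_intervalIntegral_lowerLimit_param [CompleteSpace E] (hw : ContDiff ℝ 1 w)
    (x : ℝ) {μ : ℝ → ℝ} {μ' y : ℝ} (hμ : HasDerivAt μ μ' y) :
    HasDerivAt (fun s => ∫ t in μ s..x, w (t, s))
      ((∫ t in μ y..x, partialSnd w (t, y)) - μ' • w (μ y, y)) y := by
  refine ((hasStrictFDerivAt_intervalIntegral_lowerLimit_param hw x (μ y, y)).hasFDerivAt
    |>.comp_hasDerivAt (f := fun s => (μ s, s)) y (hμ.prodMk (hasDerivAt_id y))).congr_deriv ?_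
  simp [sub_eq_neg_add]

end PartialDerivatives

theorem planarLaplacian_eq_partial {v : ℝ × ℝ → ℝ} (hv : ContDiff ℝ 2 v) (p : ℝ × ℝ) :
    planarLaplacian v p = partialFst (partialFst v) p + partialSnd (partialSnd v) p := by
  have hv' : ContDiff ℝ (1 + 1) v := hv
  have hd : Differentiable ℝ v := hv.differentiable two_ne_zero
  have h₁ : (fun t => deriv (fun s => v (s, p.2)) t) = fun t => partialFst v (t, p.2) :=
    funext fun t => (hd _).hasDerivAt_partialFst.deriv
  have h₂ : (fun t => deriv (fun s => v (p.1, s)) t) = fun t => partialSnd v (p.1, t) :=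
    funext fun t => (hd _).hasDerivAt_partialSnd.deriv
  rw [planarLaplacian, h₁, h₂,
    (((contDiff_partialFst hv').differentiable one_ne_zero) _).hasDerivAt_partialFst.deriv,
    (((contDiff_partialSnd hv').differentiable one_ne_zero) _).hasDerivAt_partialSnd.deriv]

theorem integral_partialSnd_partialSnd_of_helmholtz {v : ℝ × ℝ → ℝ} (hv : ContDiff ℝ 2 v)
    {k : ℝ} (hveq : ∀ p, planarLaplacian v p + k * v p = 0) (c d y : ℝ) :
    ∫ t in c..d, partialSnd (partialSnd v) (t, y) =
      partialFst v (c, y) - partialFst v (d, y) - k * ∫ t in c..d, v (t, y) := by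
  have hv₁ : ContDiff ℝ 1 (partialFst v) := contDiff_partialFst (n := 1) hv
  have hvyy : ∀ t, partialSnd (partialSnd v) (t, y) =
      -partialFst (partialFst v) (t, y) - k * v (t, y) := fun t => by
    linarith [hveq (t, y), planarLaplacian_eq_partial hv (t, y)]
  have hv₁₁ : Continuous fun t => partialFst (partialFst v) (t, y) := by
    have := continuous_partialFst hv₁
    fun_prop
  have hftc : ∫ t in c..d, partialFst (partialFst v) (t, y) =
      partialFst v (d, y) - partialFst v (c, y) :=
    integral_eq_sub_of_hasDerivAt
      (fun t _ => ((hv₁.differentiable one_ne_zero) _).hasDerivAt_partialFst)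
      (hv₁₁.intervalIntegrable _ _)
  simp_rw [hvyy]
  rw [intervalIntegral.integral_sub (f := fun t => -partialFst (partialFst v) (t, y))
    (hv₁₁.intervalIntegrable _ _).neg
    ((by fun_prop : Continuous fun t => k * v (t, y)).intervalIntegrable _ _),
    intervalIntegral.integral_neg, intervalIntegral.integral_const_mul, hftc]
  ring

theorem deriv_deriv_intervalIntegral_upperLimit {v : ℝ × ℝ → ℝ} (hv : ContDiff ℝ 1 v)
    (c x y : ℝ) :
    deriv (fun s => deriv (fun r => ∫ t in c..r, v (t, y)) s) x = partialFst v (x, y) := by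
  have hslice : Continuous fun t => v (t, y) := by fun_prop
  have hfirst : (fun s => deriv (fun r => ∫ t in c..r, v (t, y)) s) = fun s => v (s, y) :=
    funext fun s => (hslice.integral_hasStrictDerivAt c s).hasDerivAt.deriv
  rw [hfirst]
  exact ((hv.differentiable one_ne_zero) _).hasDerivAt_partialFst.deriv

theorem deriv_deriv_intervalIntegral_lowerLimit {v : ℝ × ℝ → ℝ} (hv : ContDiff ℝ 2 v)
    {μ : ℝ → ℝ} {U : Set ℝ} (hU : IsOpen U) (hμ : DifferentiableOn ℝ μ U)
    (hvμ : ∀ s ∈ U, v (μ s, s) = 0) (x : ℝ) {y : ℝ} (hy : y ∈ U) :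
    deriv (fun s => deriv (fun r => ∫ t in μ r..x, v (t, r)) s) y =
      (∫ t in μ y..x, partialSnd (partialSnd v) (t, y)) - deriv μ y * partialSnd v (μ y, y) := by
  have hμ' : ∀ s ∈ U, HasDerivAt μ (deriv μ s) s := fun s hs =>
    ((hμ s hs).differentiableAt (hU.mem_nhds hs)).hasDerivAt
  -- the boundary term `μ' s • v (μ s, s)` of the first derivative vanishes on `U`
  have hfirst : (fun s => deriv (fun r => ∫ t in μ r..x, v (t, r)) s)
      =ᶠ[nhds y] fun s => ∫ t in μ s..x, partialSnd v (t, s) := by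
    filter_upwards [hU.mem_nhds hy] with s hs
    have := hasDerivAt_intervalIntegral_lowerLimit_param (hv.of_le one_le_two) x (hμ' s hs)
    rw [hvμ s hs, smul_zero, sub_zero] at this
    exact this.deriv
  rw [hfirst.deriv_eq]
  exact (hasDerivAt_intervalIntegral_lowerLimit_param (contDiff_partialSnd (n := 1) hv) x
    (hμ' y hy)).deriv

/-- If `v` is `C²` with `Δv + 4v = 0` on `ℝ²`, and `μ` is `C¹` on `(a,b)` with
`v(μ(y), y) = 0`, then `u(x,y) = ∫_{μ(y)}^x v(t,y) dt` satisfies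
`Δu + 4u + h(y) = 0` for `h(y) = v_y(μ(y),y)·μ′(y) − v_x(μ(y),y)`. -/
theorem antiderivative_solves_affine_equation
    (v : ℝ × ℝ → ℝ) (hv : ContDiff ℝ 2 v)
    (hveq : ∀ p : ℝ × ℝ, planarLaplacian v p + 4 * v p = 0)
    (a b : ℝ) (μ : ℝ → ℝ) (hμ : ContDiffOn ℝ 1 μ (Set.Ioo a b))
    (hvμ : ∀ y ∈ Set.Ioo a b, v (μ y, y) = 0)
    (u : ℝ × ℝ → ℝ) (hu : u = fun p => ∫ t in (μ p.2)..p.1, v (t, p.2))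
    (h : ℝ → ℝ)
    (hh : h = fun y =>
      deriv (fun s => v (μ y, s)) y * deriv μ y - deriv (fun t => v (t, y)) (μ y)) :
    ∀ x : ℝ, ∀ y ∈ Set.Ioo a b,
      planarLaplacian u (x, y) + 4 * u (x, y) + h y = 0 := by
  intro x y hy
  have hvd : Differentiable ℝ v := hv.differentiable two_ne_zero
  subst hu hh
  simp only [planarLaplacian]
  rw [deriv_deriv_intervalIntegral_upperLimit (hv.of_le one_le_two),
    deriv_deriv_intervalIntegral_lowerLimit hv isOpen_Ioo (hμ.differentiableOn one_ne_zero) hvμ x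
      hy,
    integral_partialSnd_partialSnd_of_helmholtz hv hveq, (hvd _).hasDerivAt_partialSnd.deriv,
    (hvd _).hasDerivAt_partialFst.deriv]
  ring
end

section
/- Let f : ℝ² → ℝ be real-analytic and suppose that for every integer k, f(2kπ − x, y) = −f(x,y) for all (x,y) ∈ ℝ² (f is odd about every vertical line x = kπ). Then there exists a real-analytic function g : ℝ² → ℝ such that f(x,y) = g(x,y)·sin x for all (x,y) ∈ ℝ²; moreover g can be chosen so that g(2kπ − x, y) = g(x,y) for every integer k (g is even about every line x = kπ). -/
/-!
Write `z = (x, y)` and `w = (0, y)`. For a multilinear `q` the telescoping identity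
`q(z,…,z) - q(w,…,w) = ∑ₖ q(z,…,z, z - w, w,…,w)` with `z - w = x • (1, 0)` divides every term of
the power series of `f` at `(c, y₀)` by `x - c`, so `f(x, y) - f(c, y)` is `x - c` times an analytic
function. Oddness makes `f` vanish on the lines `x = kπ`, so near such a line `f(x, y) / sin x` is
this analytic function divided by `sin x / (x - c)`, which is analytic and nonzero at `c`. On the
lines themselves the quotient takes l'Hôpital's value `∂ₓf / cos`, and the symmetry of the quotient
follows from the oddness of `f` and of `sin` (and hence the evenness of their `x`-derivatives).
-/

open Real Filter Topology
open scoped NNReal ENNReal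

noncomputable section

namespace FormalMultilinearSeries

variable {𝕜 E F : Type*} [NontriviallyNormedField 𝕜] [NormedAddCommGroup E] [NormedSpace 𝕜 E]
  [NormedAddCommGroup F] [NormedSpace 𝕜 F]

theorem radius_le_radius_of_norm_le_succ_mul {p q : FormalMultilinearSeries 𝕜 E F}
    (h : ∀ n, ‖q n‖ ≤ (n + 1) * ‖p (n + 1)‖) : p.radius ≤ q.radius := by
  refine ENNReal.le_of_forall_nnreal_lt fun r hr => ?_
  obtain ⟨r', hrr', hr'⟩ := ENNReal.lt_iff_exists_nnreal_btwn.1 hr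
  obtain ⟨C, -, hC⟩ := p.norm_mul_pow_le_of_lt_radius hr'
  have hr_lt : (r : ℝ) < r' := mod_cast ENNReal.coe_lt_coe.1 hrr'
  have hr'0 : (0 : ℝ) < r' := r.2.trans_lt hr_lt
  set a : ℝ := r / r'
  have ha0 : 0 ≤ a := by positivity
  have ha1 : a < 1 := (div_lt_one hr'0).2 hr_lt
  have hbound : ∀ n : ℕ, ‖q n‖ * (r : ℝ) ^ n ≤ C / r' * ((n + 1) * a ^ n) := fun n =>
    calc ‖q n‖ * (r : ℝ) ^ n ≤ (n + 1) * ‖p (n + 1)‖ * (r : ℝ) ^ n := by gcongr; exact h n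
      _ = (n + 1) * a ^ n / r' * (‖p (n + 1)‖ * (r' : ℝ) ^ (n + 1)) := by
        simp only [a, div_pow]; field_simp; ring
      _ ≤ (n + 1) * a ^ n / r' * C := by gcongr; exact hC _
      _ = C / r' * ((n + 1) * a ^ n) := by ring
  have htendsto : Tendsto (fun n : ℕ => C / r' * ((n + 1) * a ^ n)) atTop (𝓝 0) := by
    have := ((tendsto_self_mul_const_pow_of_lt_one ha0 ha1).add
      (tendsto_pow_atTop_nhds_zero_of_lt_one ha0 ha1)).const_mul (C / r')
    simpa [add_mul] using this
  obtain ⟨B, hB⟩ := htendsto.bddAbove_range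
  exact q.le_radius_of_bound B fun n => (hbound n).trans (hB ⟨n, rfl⟩)

def fstSlopeTerm {m : ℕ} (q : ContinuousMultilinearMap 𝕜 (fun _ : Fin (m + 1) => 𝕜 × E) F)
    (k : Fin (m + 1)) : ContinuousMultilinearMap 𝕜 (fun _ : Fin m => 𝕜 × E) F :=
  (q.curryMid k (1, 0)).compContinuousLinearMap fun j =>
    if j.castSucc < k then ContinuousLinearMap.id 𝕜 (𝕜 × E)
    else (ContinuousLinearMap.inr 𝕜 𝕜 E).comp (ContinuousLinearMap.snd 𝕜 𝕜 E)

theorem fstSlopeTerm_apply {m : ℕ}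
    (q : ContinuousMultilinearMap 𝕜 (fun _ : Fin (m + 1) => 𝕜 × E) F) (k : Fin (m + 1))
    (v : Fin m → 𝕜 × E) :
    fstSlopeTerm q k v =
      q (k.insertNth (1, 0) fun j => if j.castSucc < k then v j else (0, (v j).2)) := by
  simp only [fstSlopeTerm, ContinuousMultilinearMap.compContinuousLinearMap_apply,
    ContinuousMultilinearMap.curryMid_apply]
  congr 2; funext j; split_ifs <;> simp

theorem norm_fstSlopeTerm_le {m : ℕ}
    (q : ContinuousMultilinearMap 𝕜 (fun _ : Fin (m + 1) => 𝕜 × E) F) (k : Fin (m + 1)) :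
    ‖fstSlopeTerm q k‖ ≤ ‖q‖ := by
  have hcurry : ‖q.curryMid k (1, 0)‖ ≤ ‖q‖ :=
    ContinuousMultilinearMap.opNorm_le_bound (norm_nonneg q) fun v => by
      simpa using q.norm_map_insertNth_le (i := k) (1, 0) v
  have hslot : ∀ j : Fin m, ‖if j.castSucc < k then ContinuousLinearMap.id 𝕜 (𝕜 × E)
      else (ContinuousLinearMap.inr 𝕜 𝕜 E).comp (ContinuousLinearMap.snd 𝕜 𝕜 E)‖ ≤ 1 := by
    intro j
    split_ifs
    · exact ContinuousLinearMap.norm_id_le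
    · exact ContinuousLinearMap.opNorm_le_bound _ zero_le_one fun z => by simpa using norm_snd_le z
  calc ‖fstSlopeTerm q k‖ ≤ ‖q.curryMid k (1, 0)‖ * ∏ j : Fin m, 1 :=
        (ContinuousMultilinearMap.norm_compContinuousLinearMap_le _ _).trans <| by
          gcongr with j; exact hslot j
    _ ≤ ‖q‖ := by simpa using hcurry

/-- The power series of the slope `(f z - f (c.1, z.2)) / (z.1 - c.1)` in the first variable, where
`p` is the power series of `f` at `c`. -/
def fstSlope (p : FormalMultilinearSeries 𝕜 (𝕜 × E) F) : FormalMultilinearSeries 𝕜 (𝕜 × E) F :=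
  fun m => ∑ k, fstSlopeTerm (p (m + 1)) k

theorem norm_fstSlope_le (p : FormalMultilinearSeries 𝕜 (𝕜 × E) F) (m : ℕ) :
    ‖p.fstSlope m‖ ≤ (m + 1) * ‖p (m + 1)‖ :=
  (norm_sum_le _ _).trans <| by
    simpa using Finset.sum_le_sum fun k (_ : k ∈ Finset.univ) => norm_fstSlopeTerm_le (p (m + 1)) k

theorem radius_le_radius_fstSlope (p : FormalMultilinearSeries 𝕜 (𝕜 × E) F) :
    p.radius ≤ p.fstSlope.radius :=
  radius_le_radius_of_norm_le_succ_mul p.norm_fstSlope_le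

theorem fst_smul_fstSlope_apply (p : FormalMultilinearSeries 𝕜 (𝕜 × E) F) (m : ℕ) (z : 𝕜 × E) :
    z.1 • p.fstSlope m (fun _ => z) = p (m + 1) (fun _ => z) - p (m + 1) (fun _ => (0, z.2)) := by
  classical
  have := (p (m + 1)).toMultilinearMap.map_sub_map_piecewise (fun _ => z) (fun _ => (0, z.2))
    Finset.univ
  simp only [Finset.piecewise_univ, Finset.mem_univ, true_implies,
    ContinuousMultilinearMap.coe_coe] at this
  rw [this, fstSlope, sum_apply, Finset.smul_sum]
  refine Finset.sum_congr rfl fun k _ => ?_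
  rw [fstSlopeTerm_apply, ← ContinuousMultilinearMap.coe_coe,
    ← MultilinearMap.map_insertNth_smul]
  congr 1
  ext1 l
  refine Fin.succAboveCases k ?_ (fun j => ?_) l
  · ext <;> simp
  · simp [Fin.succAbove_lt_iff_castSucc_lt, Fin.succAbove_ne k j |>.symm]

end FormalMultilinearSeries

section FstSlope

variable {𝕜 E F : Type*} [NontriviallyNormedField 𝕜] [NormedAddCommGroup E] [NormedSpace 𝕜 E]
  [NormedAddCommGroup F] [NormedSpace 𝕜 F] [CompleteSpace F]
  {f : 𝕜 × E → F} {p : FormalMultilinearSeries 𝕜 (𝕜 × E) F} {c : 𝕜 × E} {r : ℝ≥0∞}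

theorem HasFPowerSeriesOnBall.hasFPowerSeriesOnBall_fstSlope (hf : HasFPowerSeriesOnBall f p c r) :
    HasFPowerSeriesOnBall (fun z => p.fstSlope.sum (z - c)) p.fstSlope c r := by
  have hr : r ≤ p.fstSlope.radius := hf.r_le.trans p.radius_le_radius_fstSlope
  simpa using
    ((p.fstSlope.hasFPowerSeriesOnBall (hf.r_pos.trans_le hr)).comp_sub c).mono hf.r_pos hr

theorem HasFPowerSeriesOnBall.fst_sub_smul_fstSlope_sum (hf : HasFPowerSeriesOnBall f p c r)
    {z : 𝕜 × E} (hz : z ∈ Metric.eball c r) :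
    (z.1 - c.1) • p.fstSlope.sum (z - c) = f z - f (c.1, z.2) := by
  set v := z - c
  have hv : v ∈ Metric.eball (0 : 𝕜 × E) r := by
    rwa [Metric.mem_eball, edist_zero_right, ← edist_eq_enorm_sub]
  have hw : ((0 : 𝕜), v.2) ∈ Metric.eball (0 : 𝕜 × E) r := by
    rw [Metric.mem_eball] at hv ⊢
    refine lt_of_le_of_lt ?_ hv
    simp only [Prod.edist_eq, Prod.fst_zero, Prod.snd_zero, edist_self]
    exact max_le zero_le (le_max_right _ _)
  have hdiff := (hf.hasSum hv).sub (hf.hasSum hw)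
  rw [← hasSum_nat_add_iff' 1] at hdiff
  have hslope := (p.fstSlope.hasSum (Metric.eball_subset_eball
    (hf.r_le.trans p.radius_le_radius_fstSlope) hv)).const_smul v.1
  simp only [← FormalMultilinearSeries.fst_smul_fstSlope_apply] at hdiff
  have hp0 : (p 0 fun _ => v) - p 0 (fun _ => (0, v.2)) = 0 :=
    sub_eq_zero.2 (congrArg _ (Subsingleton.elim _ _))
  have hcw : c + ((0 : 𝕜), v.2) = (c.1, z.2) := by ext <;> simp [v]
  rw [Finset.sum_range_one, hp0, sub_zero, add_sub_cancel, hcw] at hdiff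
  exact hslope.unique hdiff

theorem AnalyticAt.exists_analyticAt_sub_eq_fst_sub_smul (hf : AnalyticAt 𝕜 f c) :
    ∃ G : 𝕜 × E → F, AnalyticAt 𝕜 G c ∧ ∀ᶠ z in 𝓝 c, f z - f (c.1, z.2) = (z.1 - c.1) • G z :=
  let ⟨_, _, hp⟩ := hf
  ⟨_, hp.hasFPowerSeriesOnBall_fstSlope.analyticAt, eventually_of_mem
    (Metric.eball_mem_nhds c hp.r_pos) fun _ hz => (hp.fst_sub_smul_fstSlope_sum hz).symm⟩

end FstSlope

theorem deriv_eq_of_eventuallyEq_sub_mul {𝕜 : Type*} [NontriviallyNormedField 𝕜] {φ ψ : 𝕜 → 𝕜}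
    {c : 𝕜} (hψ : DifferentiableAt 𝕜 ψ c) (hφ : φ =ᶠ[𝓝 c] fun t => (t - c) * ψ t) :
    deriv φ c = ψ c := by
  rw [hφ.deriv_eq, (((hasDerivAt_id' c).sub_const c).fun_mul hψ.hasDerivAt).deriv]
  simp

theorem deriv_const_sub_of_forall_eq_neg {𝕜 F : Type*} [NontriviallyNormedField 𝕜]
    [NormedAddCommGroup F] [NormedSpace 𝕜 F] {φ : 𝕜 → F} {a : 𝕜}
    (hφ : ∀ t, φ (a - t) = -φ t) (x : 𝕜) : deriv φ (a - x) = deriv φ x := by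
  have h := deriv_comp_const_sub (f := φ) (a := a) (x := x)
  simp only [hφ, deriv.fun_neg, neg_inj] at h
  exact h.symm

section DivFst

variable {𝕜 E : Type*} [NontriviallyNormedField 𝕜] {f : 𝕜 × E → 𝕜} {h : 𝕜 → 𝕜}

open Classical in
/-- `f z / h z.1`, extended across the zeros of `h` by l'Hôpital's rule. -/
def divFst (f : 𝕜 × E → 𝕜) (h : 𝕜 → 𝕜) (z : 𝕜 × E) : 𝕜 :=
  if h z.1 = 0 then deriv (fun t => f (t, z.2)) z.1 / deriv h z.1 else f z / h z.1

theorem divFst_mul (hf : ∀ z, h z.1 = 0 → f z = 0) (z : 𝕜 × E) : divFst f h z * h z.1 = f z := by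
  unfold divFst
  split_ifs with hz
  · rw [hz, mul_zero, hf z hz]
  · exact div_mul_cancel₀ _ hz

theorem divFst_const_sub {a : 𝕜} (hh : ∀ t, h (a - t) = -h t)
    (hf : ∀ x y, f (a - x, y) = -f (x, y)) (x : 𝕜) (y : E) :
    divFst f h (a - x, y) = divFst f h (x, y) := by
  dsimp only [divFst]
  rw [hh, neg_eq_zero]
  split_ifs
  · rw [deriv_const_sub_of_forall_eq_neg (fun t => hf t y), deriv_const_sub_of_forall_eq_neg hh]
  · rw [hf, neg_div_neg_eq]

variable [NormedAddCommGroup E] [NormedSpace 𝕜 E]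

theorem analyticAt_divFst_of_ne_zero {z₀ : 𝕜 × E} (hf : AnalyticAt 𝕜 f z₀)
    (hh : AnalyticAt 𝕜 h z₀.1) (hz₀ : h z₀.1 ≠ 0) : AnalyticAt 𝕜 (divFst f h) z₀ := by
  have hhfst : AnalyticAt 𝕜 (fun z : 𝕜 × E => h z.1) z₀ := hh.comp analyticAt_fst
  refine (hf.div hhfst hz₀).congr ?_
  filter_upwards [hhfst.continuousAt.eventually_ne hz₀] with z hz
  simp [divFst, hz]

theorem analyticAt_divFst_of_eq_zero [CompleteSpace 𝕜] {z₀ : 𝕜 × E} (hf : AnalyticAt 𝕜 f z₀)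
    (hh : AnalyticAt 𝕜 h z₀.1) (hz₀ : h z₀.1 = 0) (hh' : deriv h z₀.1 ≠ 0)
    (hf0 : ∀ z, h z.1 = 0 → f z = 0) : AnalyticAt 𝕜 (divFst f h) z₀ := by
  obtain ⟨c, y₀⟩ := z₀
  obtain ⟨G, hG, hfG⟩ := hf.exists_analyticAt_sub_eq_fst_sub_smul
  have hfG' : ∀ᶠ z in 𝓝 (c, y₀), f z = (z.1 - c) * G z :=
    hfG.mono fun z hz => by rwa [hf0 (c, z.2) hz₀, sub_zero] at hz
  have hs : AnalyticAt 𝕜 (dslope h c) c :=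
    let ⟨_, hp⟩ := hh; ⟨_, hp.has_fpower_series_dslope_fslope⟩
  have hsc : dslope h c c ≠ 0 := by rwa [dslope_same]
  have hhs : ∀ t, h t = (t - c) * dslope h c t := fun t => by
    rw [← smul_eq_mul, sub_smul_dslope, hz₀, sub_zero]
  have hsfst : AnalyticAt 𝕜 (fun z : 𝕜 × E => dslope h c z.1) (c, y₀) := hs.comp analyticAt_fst
  refine (hG.div hsfst hsc).congr ?_
  filter_upwards [hfG'.eventually_nhds, hG.eventually_analyticAt,
    hsfst.continuousAt.eventually_ne hsc] with ⟨x, y⟩ hfz hGz hsz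
  by_cases hxc : x = c
  · subst hxc
    have hφ : (fun t => f (t, y)) =ᶠ[𝓝 x] fun t => (t - x) * G (t, y) :=
      (Continuous.prodMk_left y).continuousAt.eventually hfz
    have hψ : DifferentiableAt 𝕜 (fun t => G (t, y)) x :=
      hGz.differentiableAt.comp x (differentiableAt_id.prodMk (differentiableAt_const y))
    simp [divFst, hz₀, deriv_eq_of_eventuallyEq_sub_mul hψ hφ, ← dslope_same]
  · have hxc' : x - c ≠ 0 := sub_ne_zero.2 hxc
    have hhx : h x ≠ 0 := by rw [hhs]; exact mul_ne_zero hxc' hsz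
    simp only [Pi.div_apply, divFst, if_neg hhx, hfz.self_of_nhds, hhs x,
      mul_div_mul_left _ _ hxc']

theorem analyticAt_divFst [CompleteSpace 𝕜] {z₀ : 𝕜 × E} (hf : AnalyticAt 𝕜 f z₀)
    (hh : AnalyticAt 𝕜 h z₀.1) (hh' : h z₀.1 = 0 → deriv h z₀.1 ≠ 0)
    (hf0 : ∀ z, h z.1 = 0 → f z = 0) : AnalyticAt 𝕜 (divFst f h) z₀ := by
  by_cases hz₀ : h z₀.1 = 0
  · exact analyticAt_divFst_of_eq_zero hf hh hz₀ (hh' hz₀) hf0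
  · exact analyticAt_divFst_of_ne_zero hf hh hz₀

end DivFst

end

/-- If `f : ℝ² → ℝ` is real-analytic and odd about every vertical line `x = kπ`
(`k ∈ ℤ`), then `f(x,y) = g(x,y)·sin x` for a real-analytic `g` which is even about
every line `x = kπ`. -/
theorem odd_analytic_factors_through_sin
    (f : ℝ × ℝ → ℝ)
    (hf : AnalyticOnNhd ℝ f Set.univ)
    (hodd : ∀ k : ℤ, ∀ x y : ℝ, f (2 * k * π - x, y) = -f (x, y)) :
    ∃ g : ℝ × ℝ → ℝ,
      AnalyticOnNhd ℝ g Set.univ ∧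
      (∀ x y : ℝ, f (x, y) = g (x, y) * Real.sin x) ∧
      (∀ k : ℤ, ∀ x y : ℝ, g (2 * k * π - x, y) = g (x, y)) := by
  have hzero : ∀ z : ℝ × ℝ, sin z.1 = 0 → f z = 0 := by
    rintro ⟨x, y⟩ hx
    obtain ⟨n, rfl⟩ := sin_eq_zero_iff.1 hx
    have h := hodd n (n * π) y
    rw [show 2 * (n : ℝ) * π - n * π = n * π by ring] at h
    linarith
  have hsin_odd (k : ℤ) (t : ℝ) : sin (2 * k * π - t) = -sin t := by
    rw [show 2 * (k : ℝ) * π = k * (2 * π) by ring, sin_int_mul_two_pi_sub]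
  have hsin_simple (x : ℝ) (hx : sin x = 0) : deriv sin x ≠ 0 := by
    rw [Real.deriv_sin]
    rcases sin_eq_zero_iff_cos_eq.1 hx with h | h <;> simp [h]
  exact ⟨divFst f sin, fun z _ => analyticAt_divFst (hf z trivial) analyticAt_sin
    (hsin_simple z.1) hzero, fun x y => (divFst_mul hzero (x, y)).symm,
    fun k x y => divFst_const_sub (hsin_odd k) (hodd k) x y⟩
end
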